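/- arXiv:2102.03648 — 6 statements merged into one kernel-verified Lean document; each statement's English description precedes it below -/
import Mathlib

section
/- Let M be a metrizable topological space. For any open set W⊆M×[0,1] containing the set M×{0}, there exists a continuous function λ:M→(0,1] such that {(x,t)∈M×[0,1] : 0≤t≤λ(x)} ⊆ W. -/
open Set Topology unitInterval

/-! For a metric on `M`, the distance from `(x, 0)` to the closed set `Wᶜ` is continuous and
positive in `x`, and every `(x, t)` with `t` below it lies in `W`; halving it and capping it
at `1` gives `λ`. -/

theorem exists_continuous_pos_forall_dist_lt_mem {X Y : Type*} [PseudoMetricSpace X]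
    [PseudoMetricSpace Y] {W : Set (X × Y)} (hW : IsOpen W) {y₀ : Y}
    (hW₀ : ∀ x, (x, y₀) ∈ W) :
    ∃ δ : X → ℝ, Continuous δ ∧ (∀ x, 0 < δ x) ∧ ∀ x y, dist y y₀ < δ x → (x, y) ∈ W := by
  rcases (Wᶜ).eq_empty_or_nonempty with hempty | hnonempty
  · rw [compl_empty_iff] at hempty
    exact ⟨fun _ => 1, continuous_const, fun _ => one_pos, fun x y _ => hempty ▸ mem_univ _⟩
  refine ⟨fun x => Metric.infDist (x, y₀) Wᶜ,
    (Metric.continuous_infDist_pt _).comp (continuous_id.prodMk continuous_const),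
    fun x => (hW.isClosed_compl.notMem_iff_infDist_pos hnonempty).mp (not_not.mpr (hW₀ x)),
    fun x y hy => ?_⟩
  have hdist : dist (x, y₀) (x, y) = dist y y₀ := by
    rw [Prod.dist_eq, dist_self, dist_comm, max_eq_right dist_nonneg]
  exact not_not.mp (Metric.notMem_of_dist_lt_infDist (hdist ▸ hy))

/-- For any open set `W ⊆ M × [0,1]` containing `M × {0}` there is a continuous function
`λ : M → (0,1]` such that `{(x,t) : 0 ≤ t ≤ λ(x)} ⊆ W`. -/
theorem statement3 {M : Type*} [TopologicalSpace M] [TopologicalSpace.MetrizableSpace M]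
    (W : Set (M × I)) (hW : IsOpen W) (hW0 : ∀ x : M, (x, (0 : I)) ∈ W) :
    ∃ l : M → ℝ, Continuous l ∧ (∀ x, l x ∈ Set.Ioc (0 : ℝ) 1) ∧
      ∀ (x : M) (t : I), (t : ℝ) ≤ l x → (x, t) ∈ W := by
  let _ := TopologicalSpace.metrizableSpaceMetric M
  obtain ⟨δ, hδ_cont, hδ_pos, hδ_mem⟩ := exists_continuous_pos_forall_dist_lt_mem hW hW0
  refine ⟨fun x => min 1 (δ x / 2), continuous_const.min (hδ_cont.div_const 2),
    fun x => ⟨lt_min one_pos (half_pos (hδ_pos x)), min_le_left _ _⟩, fun x t ht => ?_⟩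
  have hdist : dist t 0 = (t : ℝ) := by
    rw [Subtype.dist_eq, Icc.coe_zero, dist_zero_right, Real.norm_of_nonneg t.2.1]
  apply hδ_mem
  rw [hdist]
  linarith [min_le_right 1 (δ x / 2), hδ_pos x]
end

section
/- Let (M,d) be a metric space and X a homotopy dense subset of M. Then there exists a continuous map H:M×[0,1]→M such that for every x∈M and t∈(0,1]: H(x,0)=x, H(x,t)∈X, and d(x,H(x,t))<t. -/
/-!
Reparametrise the time of the given homotopy `H₀`. The running supremum
`w(x, t) = sup_{s ≤ t} d(x, H₀(x, s))` is continuous, monotone in `t` and vanishes at `t = 0`,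
so `s ↦ s + w(x, s)` is strictly increasing on `[0,1]`, starts at `0` and ends above `1`.
Its inverse `τ(x, t)`, the solution of `τ + w(x, τ) = t`, is continuous in `(x, t)`, and
`H(x, t) = H₀(x, τ(x, t))` works: for `t > 0` we have `τ > 0`, hence `H(x, t) ∈ X` and
`d(x, H(x, t)) ≤ w(x, τ) = t - τ < t`.
-/

open Set Topology unitInterval

/-- A subset `X` of a topological space `M` is homotopy dense if there is a homotopy
`H : M × [0,1] → M` with `H(x,0) = x` and `H(x,t) ∈ X` for `t ∈ (0,1]`. -/
def HomotopyDense {M : Type*} [TopologicalSpace M] (X : Set M) : Prop :=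
  ∃ H : M × I → M, Continuous H ∧ (∀ x, H (x, 0) = x) ∧
    ∀ x t, t ≠ 0 → H (x, t) ∈ X

theorem continuous_of_strictMono_of_apply_eq {X α β : Type*} [TopologicalSpace X]
    [LinearOrder α] [TopologicalSpace α] [OrderTopology α]
    [LinearOrder β] [TopologicalSpace β] [OrderClosedTopology β]
    {g : X → α → β} {τ : X → α} {c : X → β} (hg : ∀ a, Continuous fun x => g x a)
    (hmono : ∀ x, StrictMono (g x)) (hc : Continuous c) (hτ : ∀ x, g x (τ x) = c x) :
    Continuous τ := by
  refine continuous_iff_continuousAt.2 fun x₀ => tendsto_order.2 ⟨fun a ha => ?_, fun b hb => ?_⟩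
  · have hlt : g x₀ a < c x₀ := hτ x₀ ▸ hmono x₀ ha
    filter_upwards [((hg a).tendsto x₀).eventually_lt (hc.tendsto x₀) hlt] with x hx
    exact (hmono x).lt_iff_lt.1 (hτ x ▸ hx)
  · have hlt : c x₀ < g x₀ b := hτ x₀ ▸ hmono x₀ hb
    filter_upwards [(hc.tendsto x₀).eventually_lt ((hg b).tendsto x₀) hlt] with x hx
    exact (hmono x).lt_iff_lt.1 (hτ x ▸ hx)

section RunningSup

variable {X : Type*} (f : X × I → ℝ)

/-- `runningSup f (x, t) = sup_{s ≤ t} f (x, s)`. -/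
noncomputable def runningSup (p : X × I) : ℝ :=
  sSup ((fun s : I => f (p.1, min s p.2)) '' univ)

variable {f}

theorem runningSup_zero (x : X) : runningSup f (x, 0) = f (x, 0) := by
  simp [runningSup]

variable [TopologicalSpace X]

theorem continuous_runningSup (hf : Continuous f) : Continuous (runningSup f) :=
  isCompact_univ.continuous_sSup (f := fun (p : X × I) s => f (p.1, min s p.2)) (by fun_prop)

theorem bddAbove_image_runningSup (hf : Continuous f) (p : X × I) :
    BddAbove ((fun s : I => f (p.1, min s p.2)) '' univ) :=
  (isCompact_univ.image (by fun_prop)).bddAbove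

theorem le_runningSup (hf : Continuous f) (p : X × I) : f p ≤ runningSup f p :=
  le_csSup (bddAbove_image_runningSup hf p) ⟨p.2, mem_univ _, by simp⟩

theorem monotone_runningSup (hf : Continuous f) (x : X) :
    Monotone fun t => runningSup f (x, t) := by
  intro s t hst
  refine csSup_le_csSup (bddAbove_image_runningSup hf (x, t)) (univ_nonempty.image _) ?_
  rintro _ ⟨r, -, rfl⟩
  exact ⟨min r s, mem_univ _, by simp only [min_eq_left ((min_le_right r s).trans hst)]⟩

end RunningSup

theorem exists_continuous_add_eq_of_monotone {X : Type*} [TopologicalSpace X] {w : X × I → ℝ}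
    (hw : Continuous w) (hmono : ∀ x, Monotone fun t => w (x, t)) (hw0 : ∀ x, w (x, 0) = 0) :
    ∃ τ : X × I → I, Continuous τ ∧ ∀ p, (τ p : ℝ) + w (p.1, τ p) = p.2 := by
  let g : X × I → I → ℝ := fun p s => s + w (p.1, s)
  have hg_mono : ∀ p, StrictMono (g p) := fun p =>
    (Subtype.strictMono_coe _).add_monotone (hmono p.1)
  have hg_cont : ∀ p, Continuous (g p) := fun p => by fun_prop
  have hroot : ∀ p : X × I, ∃ s, g p s = p.2 := fun p =>
    intermediate_value_univ 0 1 (hg_cont p)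
      ⟨by simp [g, hw0, p.2.2.1],
        p.2.2.2.trans (by simpa [g, hw0] using hmono p.1 (zero_le_one : (0 : I) ≤ 1))⟩
  choose τ hτ using hroot
  exact ⟨τ, continuous_of_strictMono_of_apply_eq (fun s => by fun_prop) hg_mono
    continuous_subtype_val.snd' hτ, hτ⟩

/-- If `X` is homotopy dense in a metric space `(M, d)`, there is a homotopy
`H : M × [0,1] → M` with `H(x,0) = x`, `H(x,t) ∈ X` and `d(x, H(x,t)) < t` for
all `x ∈ M` and `t ∈ (0,1]`. -/
theorem statement4 {M : Type*} [MetricSpace M] (X : Set M) (hX : HomotopyDense X) :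
    ∃ H : M × I → M, Continuous H ∧ (∀ x, H (x, 0) = x) ∧
      ∀ (x : M) (t : I), t ≠ 0 → H (x, t) ∈ X ∧ dist x (H (x, t)) < (t : ℝ) := by
  obtain ⟨H₀, hH₀, hH₀_zero, hH₀_mem⟩ := hX
  have hd : Continuous fun p : M × I => dist p.1 (H₀ p) := by fun_prop
  set w := runningSup fun p : M × I => dist p.1 (H₀ p)
  have hw0 : ∀ x, w (x, 0) = 0 := fun x => by simp [w, runningSup_zero, hH₀_zero]
  have hw_nonneg : ∀ x t, 0 ≤ w (x, t) := fun x t => hw0 x ▸ monotone_runningSup hd x t.2.1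
  obtain ⟨τ, hτ, hτ_eq⟩ :=
    exists_continuous_add_eq_of_monotone (w := w) (continuous_runningSup hd)
      (monotone_runningSup hd) hw0
  refine ⟨fun p => H₀ (p.1, τ p), by fun_prop, fun x => ?_, fun x t ht => ?_⟩
  · have hτ0 : (τ (x, 0) : ℝ) + w (x, τ (x, 0)) = 0 := hτ_eq (x, 0)
    have : τ (x, 0) = 0 := Subtype.ext <| by
      rw [Icc.coe_zero]; linarith [(τ (x, 0)).2.1, hw_nonneg x (τ (x, 0))]
    simp [this, hH₀_zero]
  · have hτ_ne : τ (x, t) ≠ 0 := fun h0 => ht <| Subtype.ext <| by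
      simpa [h0, hw0] using (hτ_eq (x, t)).symm
    have hτ_pos : (0 : ℝ) < τ (x, t) := unitInterval.pos_iff_ne_zero.2 hτ_ne
    refine ⟨hH₀_mem x _ hτ_ne, ?_⟩
    linarith [le_runningSup hd (x, τ (x, t)), hτ_eq (x, t)]
end

section
/- Let M be a separable metrizable absolute neighborhood retract and X a homotopy dense subset of M. Then there exist an open neighborhood W of the diagonal in M×M and a continuous map λ:W×[0,1]→M such that for every (x,y)∈W: (1) λ(x,y,0)=x and λ(x,y,1)=y; (2) λ(x,x,t)=x for every t∈[0,1]; (3) if x≠y, then λ(x,y,t)∈X for every t∈(0,1). -/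
open Set Topology unitInterval

/-- An open cover of a topological space. -/
def IsOpenCover {M : Type*} [TopologicalSpace M] (𝒰 : Set (Set M)) : Prop :=
  (∀ U ∈ 𝒰, IsOpen U) ∧ ⋃₀ 𝒰 = Set.univ

/-- Two maps `f, g : K → M` are `𝒰`-near if every point is sent by both maps into
a common member of `𝒰`. -/
def UNear {K M : Type*} (𝒰 : Set (Set M)) (f g : K → M) : Prop :=
  ∀ x, ∃ U ∈ 𝒰, f x ∈ U ∧ g x ∈ U

/-- A space `M` is an absolute neighborhood retract if whenever `M` is embedded as a closed
subspace of a metrizable space `Y`, it is a retract of an open neighborhood. -/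
def IsANR (M : Type u) [TopologicalSpace M] : Prop :=
  ∀ (Y : Type u) [TopologicalSpace Y] [TopologicalSpace.MetrizableSpace Y]
    (f : M → Y), IsClosedEmbedding f →
      ∃ (U : Set Y) (r : Y → M), IsOpen U ∧ Set.range f ⊆ U ∧
        ContinuousOn r U ∧ ∀ x, r (f x) = x

/-!
Embed `M` isometrically into `ℓ^∞` by the Kuratowski embedding `e`. Writing a point of the convex
hull `C` of `e(M)` as `∑ wᵢ e(zᵢ)` gives `∑ wᵢ d(zᵢ, a) ≤ ‖c - e(a)‖` for all `a`, so `e(M)` is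
closed in `C`, and the ANR property yields a retraction `r` of a neighbourhood `U` of `e(M)` in
`C`. For `(x, y)` near the diagonal the segment from `e(x)` to `e(y)` stays in `U`, and `r` maps it
to a path from `x` to `y`, constant when `x = y`. The homotopy `H` witnessing homotopy density then
pushes the path into `X` at time `t (1 - t) min(d(x, y), 1)`, which vanishes exactly at the
endpoints and on the diagonal.
-/
open scoped ENNReal

namespace KuratowskiEmbedding

variable {α : Type*} [MetricSpace α] {b : ℕ → α}

theorem sum_mul_dist_le_dist_sum_smul (hb : DenseRange b) {ι : Type*} [Fintype ι]
    {w : ι → ℝ} (hw₀ : ∀ i, 0 ≤ w i) (hw₁ : ∑ i, w i = 1) (z : ι → α) (a : α) :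
    ∑ i, w i * dist (z i) a ≤
      dist (∑ i, w i • embeddingOfSubset b (z i)) (embeddingOfSubset b a) := by
  set c := ∑ i, w i • embeddingOfSubset b (z i)
  refine le_of_forall_pos_le_add fun ε hε => ?_
  obtain ⟨n, hn⟩ := Metric.mem_closure_range_iff.1 (hb a) (ε / 2) (half_pos hε)
  have hc : c n = ∑ i, w i * (dist (z i) (b n) - dist (b 0) (b n)) := by
    simp only [c, lp.coeFn_sum, Finset.sum_apply, lp.coeFn_smul, Pi.smul_apply, smul_eq_mul,
      embeddingOfSubset_coe]
  have hcoord : c n - embeddingOfSubset b a n ≤ dist c (embeddingOfSubset b a) := by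
    simpa [dist_eq_norm] using (le_abs_self _).trans
      (lp.norm_apply_le_norm ENNReal.top_ne_zero (c - embeddingOfSubset b a) n)
  calc ∑ i, w i * dist (z i) a
      ≤ ∑ i, w i * (dist (z i) (b n) + dist a (b n)) := by
        gcongr with i
        · exact hw₀ i
        · exact dist_triangle_right _ _ _
    _ = c n - embeddingOfSubset b a n + 2 * dist a (b n) := by
        simp only [hc, embeddingOfSubset_coe, mul_sub, mul_add, Finset.sum_sub_distrib,
          Finset.sum_add_distrib, ← Finset.sum_mul, hw₁]
        ring
    _ ≤ dist c (embeddingOfSubset b a) + ε := by linarith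

theorem mem_range_of_mem_closure_of_mem_convexHull (hb : DenseRange b)
    {c : lp (fun _ : ℕ => ℝ) ∞} (hc : c ∈ convexHull ℝ (range (embeddingOfSubset b)))
    (hcl : c ∈ closure (range (embeddingOfSubset b))) : c ∈ range (embeddingOfSubset b) := by
  obtain ⟨ι, _, w, z, hw₀, hw₁, hz, rfl⟩ := mem_convexHull_iff_exists_fintype.1 hc
  choose p hp using hz
  obtain rfl : (fun i => embeddingOfSubset b (p i)) = z := funext hp
  obtain ⟨i, hi⟩ : ∃ i, 0 < w i := by
    by_contra! h
    linarith [Finset.sum_nonpos fun i (_ : i ∈ Finset.univ) => h i]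
  set c := ∑ j, w j • embeddingOfSubset b (p j)
  -- `c` is a limit of points `e a`, and `w i * d(p i, a) ≤ ‖c - e a‖` forces `a → p i` along them.
  have hpi : ∀ a, dist (p i) a ≤ dist c (embeddingOfSubset b a) / w i := fun a => by
    rw [le_div_iff₀' hi]
    exact (Finset.single_le_sum (fun j _ => mul_nonneg (hw₀ j) dist_nonneg)
      (Finset.mem_univ i)).trans (sum_mul_dist_le_dist_sum_smul hb hw₀ hw₁ p a)
  refine ⟨p i, eq_of_forall_dist_le fun ε hε => ?_⟩
  obtain ⟨a, ha⟩ := Metric.mem_closure_range_iff.1 hcl (ε / (1 + (w i)⁻¹)) (by positivity)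
  calc dist (embeddingOfSubset b (p i)) c
      ≤ dist (embeddingOfSubset b (p i)) (embeddingOfSubset b a) +
          dist (embeddingOfSubset b a) c := dist_triangle _ _ _
    _ ≤ dist c (embeddingOfSubset b a) * (1 + (w i)⁻¹) := by
        rw [(embeddingOfSubset_isometry b hb).dist_eq, dist_comm _ c]
        linarith [hpi a, div_eq_mul_inv (dist c (embeddingOfSubset b a)) (w i)]
    _ ≤ ε := by
        rw [← le_div_iff₀ (by positivity)]
        exact ha.le

theorem isClosedEmbedding_codRestrict_convexHull (hb : DenseRange b) :
    IsClosedEmbedding (codRestrict (embeddingOfSubset b)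
      (convexHull ℝ (range (embeddingOfSubset b)))
      fun a => subset_convexHull ℝ _ (mem_range_self a)) := by
  refine ⟨(embeddingOfSubset_isometry b hb).isEmbedding.codRestrict _ _, ?_⟩
  have hrange : Subtype.val ⁻¹' range (embeddingOfSubset b) =
      (Subtype.val ⁻¹' closure (range (embeddingOfSubset b)) :
        Set (convexHull ℝ (range (embeddingOfSubset b)))) :=
    Subset.antisymm (fun c hc => subset_closure hc)
      fun c hc => mem_range_of_mem_closure_of_mem_convexHull hb c.2 hc
  rw [range_codRestrict, hrange]
  exact isClosed_closure.preimage continuous_subtype_val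

end KuratowskiEmbedding

/-- Dugundji's equiconnecting function on the neighbourhood `W` of the diagonal. -/
structure IsEquiconnecting {M : Type*} [TopologicalSpace M] (W : Set (M × M))
    (l : M × M × I → M) : Prop where
  isOpen : IsOpen W
  diag_mem (x : M) : (x, x) ∈ W
  continuousOn : ContinuousOn l {p | (p.1, p.2.1) ∈ W}
  apply_zero {x y : M} : (x, y) ∈ W → l (x, y, 0) = x
  apply_one {x y : M} : (x, y) ∈ W → l (x, y, 1) = y
  apply_diag (x : M) (t : I) : l (x, x, t) = x

theorem Convex.isEquiconnecting_univ {E : Type*} [AddCommGroup E] [Module ℝ E]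
    [TopologicalSpace E] [IsTopologicalAddGroup E] [ContinuousSMul ℝ E] {C : Set E}
    (hC : Convex ℝ C) :
    IsEquiconnecting (univ : Set (C × C)) fun p =>
      ⟨AffineMap.lineMap (p.1 : E) p.2.1 (p.2.2 : ℝ), hC.lineMap_mem p.1.2 p.2.1.2 p.2.2.2⟩ where
  isOpen := isOpen_univ
  diag_mem _ := mem_univ _
  continuousOn := Continuous.continuousOn <| by fun_prop
  apply_zero _ := by simp
  apply_one _ := by simp
  apply_diag _ _ := by simp

theorem IsEquiconnecting.of_retract {M Y : Type*} [TopologicalSpace M] [TopologicalSpace Y]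
    {γ : Y × Y × I → Y}
    (hγ : IsEquiconnecting (univ : Set (Y × Y)) γ) {f : M → Y} (hf : Continuous f)
    {U : Set Y} (hU : IsOpen U) (hfU : range f ⊆ U) {r : Y → M} (hr : ContinuousOn r U)
    (hrf : ∀ x, r (f x) = x) :
    IsEquiconnecting {q : M × M | ∀ t, γ (f q.1, f q.2, t) ∈ U}
      fun p => r (γ (f p.1, f p.2.1, p.2.2)) := by
  have hγc : Continuous γ := by simpa [continuousOn_univ] using hγ.continuousOn
  have hg : Continuous fun p : M × M × I => γ (f p.1, f p.2.1, p.2.2) := by fun_prop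
  refine ⟨?_, fun x t => ?_, hr.comp hg.continuousOn fun p hp => hp p.2.2,
    fun _ => ?_, fun _ => ?_, fun x t => ?_⟩
  · refine isOpen_iff_mem_nhds.2 fun q hq => ?_
    have hnhds := isCompact_univ.eventually_forall_of_forall_eventually (x₀ := q)
      (P := fun q t => γ (f q.1, f q.2, t) ∈ U) fun t _ =>
        (hU.preimage (by fun_prop)).mem_nhds (hq t)
    exact hnhds.mono fun _ h t => h t (mem_univ t)
  · rw [hγ.apply_diag]
    exact hfU (mem_range_self x)
  · simp only [hγ.apply_zero (mem_univ _), hrf]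
  · simp only [hγ.apply_one (mem_univ _), hrf]
  · simp only [hγ.apply_diag, hrf]

theorem IsEquiconnecting.exists_mem_of_homotopyDense {M : Type*} [MetricSpace M]
    {W : Set (M × M)} {l : M × M × I → M} (hl : IsEquiconnecting W l) {X : Set M}
    (hX : HomotopyDense X) :
    ∃ l' : M × M × I → M, IsEquiconnecting W l' ∧
      ∀ x y, (x, y) ∈ W → x ≠ y → ∀ t : I, t ≠ 0 → t ≠ 1 → l' (x, y, t) ∈ X := by
  obtain ⟨H, hH, hH₀, hHX⟩ := hX
  set τ : M × M × I → I := fun p => p.2.2 * σ p.2.2 * projIcc 0 1 zero_le_one (dist p.1 p.2.1)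
  have hτ : Continuous τ := by fun_prop
  refine ⟨fun p => H (l p, τ p), ⟨hl.isOpen, hl.diag_mem,
    hH.comp_continuousOn (hl.continuousOn.prodMk hτ.continuousOn), fun hxy => ?_,
    fun hxy => ?_, fun x t => ?_⟩, fun x y _ hxy t ht₀ ht₁ => hHX _ _ ?_⟩
  · simp [τ, hl.apply_zero hxy, hH₀]
  · simp [τ, hl.apply_one hxy, hH₀]
  · simp [τ, hl.apply_diag, hH₀]
  · refine mul_ne_zero (mul_ne_zero ht₀ (symm_eq_zero.not.2 ht₁)) ?_
    rw [← coe_ne_zero, coe_projIcc]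
    exact (lt_max_of_lt_right (lt_min one_pos (dist_pos.2 hxy))).ne'

open KuratowskiEmbedding in
/-- If `M` is a separable metrizable ANR and `X ⊆ M` is homotopy dense, then there are an
open neighborhood `W` of the diagonal in `M × M` and a continuous map
`λ : W × [0,1] → M` such that `λ(x,y,0) = x`, `λ(x,y,1) = y`, `λ(x,x,t) = x`, and
`λ(x,y,t) ∈ X` whenever `x ≠ y` and `t ∈ (0,1)`. -/
theorem statement5 {M : Type} [TopologicalSpace M] [TopologicalSpace.MetrizableSpace M]
    [TopologicalSpace.SeparableSpace M] (hANR : IsANR M)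
    (X : Set M) (hX : HomotopyDense X) :
    ∃ (W : Set (M × M)) (l : M × M × I → M),
      IsOpen W ∧ (∀ x : M, (x, x) ∈ W) ∧
      ContinuousOn l {p : M × M × I | (p.1, p.2.1) ∈ W} ∧
      (∀ x y : M, (x, y) ∈ W →
        (l (x, y, 0) = x ∧ l (x, y, 1) = y) ∧
        (∀ t : I, l (x, x, t) = x) ∧
        (x ≠ y → ∀ t : I, t ≠ 0 → t ≠ 1 → l (x, y, t) ∈ X)) := by
  rcases isEmpty_or_nonempty M with hM | hM
  · exact ⟨univ, Prod.fst, isOpen_univ, fun _ => mem_univ _, continuous_fst.continuousOn,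
      fun x => isEmptyElim x⟩
  let _ : MetricSpace M := TopologicalSpace.metrizableSpaceMetric M
  have he := isClosedEmbedding_codRestrict_convexHull (TopologicalSpace.denseRange_denseSeq M)
  obtain ⟨U, r, hU, hfU, hr, hrf⟩ := hANR _ _ he
  obtain ⟨l, hl, hlX⟩ := ((convex_convexHull ℝ _).isEquiconnecting_univ.of_retract
    he.continuous hU hfU hr hrf).exists_mem_of_homotopyDense hX
  exact ⟨_, l, hl.isOpen, hl.diag_mem, hl.continuousOn,
    fun x y hxy => ⟨⟨hl.apply_zero hxy, hl.apply_one hxy⟩, hl.apply_diag x, hlX x y hxy⟩⟩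
end

section
/- Let (M,d) be a metric space, W an open neighborhood of the diagonal in M×M, and λ:W×[0,1]→M a continuous map such that λ(x,x,t)=x for every x∈M and t∈[0,1]. Then for every compact set K⊆M and every ε>0 there exists δ>0 such that for every x∈K one has B(x,δ)×B(x,δ)⊆W and λ[B(x,δ)×B(x,δ)×[0,1]]⊆B(x,ε/2). -/
/-!
By compactness of `[0,1]` and continuity of `λ` on the open set over `W`, every `x` has a radius
`r x` with `B(x, r x)² ⊆ W` and `λ[B(x, r x)² × [0,1]] ⊆ B(x, ε/4)`. A Lebesgue number `δ` of the
cover of `K` by the balls `B(i, r i)` puts each `B(x, δ)` inside some `B(i, r i)`; since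
`λ(x, x, t) = x`, also `x ∈ B(i, ε/4)`, and the triangle inequality gives `ε/2`.
-/

open Set Topology unitInterval Metric Filter

lemma eventually_mem_and_forall_mem_of_continuousOn {X Y T Z : Type*} [TopologicalSpace X]
    [TopologicalSpace Y] [TopologicalSpace T] [CompactSpace T] [TopologicalSpace Z]
    {W : Set (X × Y)} (hW : IsOpen W) {l : X × Y × T → Z}
    (hl : ContinuousOn l {q | (q.1, q.2.1) ∈ W}) {p₀ : X × Y} (hp₀ : p₀ ∈ W) {V : Set Z}
    (hV : ∀ t, V ∈ 𝓝 (l (p₀.1, p₀.2, t))) :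
    ∀ᶠ p in 𝓝 p₀, p ∈ W ∧ ∀ t, l (p.1, p.2, t) ∈ V := by
  have hO : IsOpen {q : X × Y × T | (q.1, q.2.1) ∈ W} := hW.preimage (by fun_prop)
  have hlV : ∀ᶠ p in 𝓝 p₀, ∀ t ∈ univ, l (p.1, p.2, t) ∈ V :=
    isCompact_univ.eventually_forall_of_forall_eventually fun t _ =>
      ((hl.continuousAt (hO.mem_nhds hp₀)).comp
        (f := fun z : (X × Y) × T => (z.1.1, z.1.2, z.2)) (by fun_prop)).eventually_mem (hV t)
  filter_upwards [hW.mem_nhds hp₀, hlV] with p hpW hpV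
  exact ⟨hpW, fun t => hpV t (mem_univ t)⟩

lemma Metric.exists_pos_forall_ball_of_eventually_nhds_diag {α : Type*} [PseudoMetricSpace α]
    {x : α} {P : α → α → Prop} (h : ∀ᶠ p in 𝓝 (x, x), P p.1 p.2) :
    ∃ r > 0, ∀ y ∈ ball x r, ∀ z ∈ ball x r, P y z := by
  obtain ⟨r, hr, hP⟩ := eventually_nhds_iff_ball.1 h
  refine ⟨r, hr, fun y hy z hz => hP (y, z) ?_⟩
  rw [← ball_prod_same]
  exact ⟨hy, hz⟩

/-- Let `(M,d)` be a metric space, `W` an open neighborhood of the diagonal in `M × M`, and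
`λ : W × [0,1] → M` a continuous map with `λ(x,x,t) = x`.  Then for every compact `K ⊆ M`
and `ε > 0` there is `δ > 0` such that for every `x ∈ K` we have
`B(x,δ) × B(x,δ) ⊆ W` and `λ[B(x,δ) × B(x,δ) × [0,1]] ⊆ B(x, ε/2)`. -/
theorem statement6 {M : Type*} [MetricSpace M]
    (W : Set (M × M)) (hWopen : IsOpen W) (hWdiag : ∀ x : M, (x, x) ∈ W)
    (l : M × M × I → M)
    (hl : ContinuousOn l {p : M × M × I | (p.1, p.2.1) ∈ W})
    (hldiag : ∀ (x : M) (t : I), l (x, x, t) = x)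
    (K : Set M) (hK : IsCompact K) (ε : ℝ) (hε : 0 < ε) :
    ∃ δ > (0 : ℝ), ∀ x ∈ K,
      (∀ y ∈ ball x δ, ∀ z ∈ ball x δ, (y, z) ∈ W) ∧
      (∀ y ∈ ball x δ, ∀ z ∈ ball x δ, ∀ t : I, l (y, z, t) ∈ ball x (ε / 2)) := by
  have hloc (x : M) : ∃ r > 0, ∀ y ∈ ball x r, ∀ z ∈ ball x r,
      (y, z) ∈ W ∧ ∀ t, l (y, z, t) ∈ ball x (ε / 4) :=
    exists_pos_forall_ball_of_eventually_nhds_diag <|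
      eventually_mem_and_forall_mem_of_continuousOn hWopen hl (hWdiag x) fun t =>
        isOpen_ball.mem_nhds (by simpa [hldiag] using hε)
  choose r hr0 hr using hloc
  obtain ⟨δ, hδ, hleb⟩ := lebesgue_number_lemma_of_metric hK (fun i => isOpen_ball (x := i))
    fun x _ => mem_iUnion.2 ⟨x, mem_ball_self (hr0 x)⟩
  refine ⟨δ, hδ, fun x hx => ?_⟩
  obtain ⟨i, hδi⟩ := hleb x hx
  have hxi : x ∈ ball i (r i) := hδi (mem_ball_self hδ)
  have hxi' : dist x i < ε / 4 := by simpa [hldiag] using (hr i x hxi x hxi).2 0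
  refine ⟨fun y hy z hz => (hr i y (hδi hy) z (hδi hz)).1, fun y hy z hz t => ?_⟩
  have hlt : dist (l (y, z, t)) i < ε / 4 := (hr i y (hδi hy) z (hδi hz)).2 t
  calc dist (l (y, z, t)) x ≤ dist (l (y, z, t)) i + dist x i := dist_triangle_right _ _ _
    _ < ε / 2 := by linarith
end

section
/- Let M be a separable metrizable absolute neighborhood retract with a metric d generating its topology, equipped with a continuous binary operation *:M×M→M and continuous unary operations u,v:M→M such that u(x)*v(x)=x for all x∈M. Let X be a homotopy dense subset of M such that for all x,y∈M, x*y∈X if and only if x∈X and y∈X. Let vC be a class of pairs (K,C) with K compact metrizable and C⊆K, and assume the pair (M,X) is everywhere vC-preuniversal. Then for any ε>0, pair (K,C)∈vC, closed subspace F⊆K, finite-dimensional compact metrizable space Z, and continuous maps f:F→Z and g:Z→X, there exists a continuous map h:F→M such that d(h(x),g(f(x)))<ε for every x∈F and h⁻¹[X]=F∩C. -/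
open Set Topology unitInterval

/-- The pair `(M, X)` is everywhere `vC`-preuniversal. -/
def EverywherePreuniversalPair {M : Type} [TopologicalSpace M] (X : Set M)
    (vC : (K : Type) → [TopologicalSpace K] → Set K → Prop) : Prop :=
  ∀ U : Set M, IsOpen U → U.Nonempty →
    ∀ (K : Type) [TopologicalSpace K] [CompactSpace K] [TopologicalSpace.MetrizableSpace K]
      (C : Set K), vC K C →
      ∃ f : K → M, Continuous f ∧ f ⁻¹' X = C ∧ Set.range f ⊆ U

/-- `CovDimLE Z n` means the covering dimension of `Z` is at most `n`: every open cover
of `Z` admits an open refinement in which every point lies in at most `n + 1` members. -/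
def CovDimLE (Z : Type*) [TopologicalSpace Z] (n : ℕ) : Prop :=
  ∀ 𝒰 : Set (Set Z), IsOpenCover 𝒰 →
    ∃ 𝒱 : Set (Set Z), IsOpenCover 𝒱 ∧ (∀ V ∈ 𝒱, ∃ U ∈ 𝒰, V ⊆ U) ∧
      ∀ x : Z, {V ∈ 𝒱 | x ∈ V}.encard ≤ n + 1

/-- A space is finite-dimensional if its covering dimension is at most `n` for some `n`. -/
def FiniteCovDim (Z : Type*) [TopologicalSpace Z] : Prop :=
  ∃ n : ℕ, CovDimLE Z n


/-!
With `n = dim Z`, the relation `u x * v x = x` factors `g z` as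
`u (g z) * (u (v (g z)) * (⋯ * (u (v^[n] (g z)) * v^[n+1] (g z))))`. Cover `Z` by open sets on
which the `n + 1` factors `u ∘ v^[j] ∘ g` oscillate little; since `dim Z ≤ n`, a refinement can
be coloured with `n + 1` colours so that sets of equal colour are disjoint. Near each set of
colour `j`, the `j`-th factor is replaced by a preuniversal map `φ : K → M` with `φ⁻¹[X] = C`
(glued in through the ANR property), and away from these sets it is pushed into `X` by the
homotopy; the last factor is pushed into `X` as well. As `x * y ∈ X ↔ x ∈ X ∧ y ∈ X` and every
point has some colour at which its factor is such a `φ`, the product `h` of the new factors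
satisfies `h⁻¹[X] = F ∩ C`, and it is close to `g ∘ f` by uniform continuity of the product.
-/

open BoundedContinuousFunction

theorem IsCompact.exists_forall_dist_lt_of_continuousAt {α β : Type*} [PseudoMetricSpace α]
    [PseudoMetricSpace β] {f : α → β} {s : Set α} (hs : IsCompact s)
    (hf : ∀ a ∈ s, ContinuousAt f a) {ε : ℝ} (hε : 0 < ε) :
    ∃ δ > 0, ∀ a ∈ s, ∀ b, dist b a < δ → dist (f b) (f a) < ε := by
  obtain ⟨δ, hδ, h⟩ := Metric.mem_uniformity_dist.1
    (hs.uniformContinuousAt_of_continuousAt f hf (Metric.dist_mem_uniformity hε))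
  refine ⟨δ, hδ, fun a ha b hb => ?_⟩
  rw [dist_comm]
  exact h (by rwa [dist_comm]) ha

section ChainMul

variable {M : Type*} (mul : M → M → M)

def chainMul : (k : ℕ) → (Fin k → M) → M → M
  | 0, _, b => b
  | k + 1, a, b => mul (a 0) (chainMul k (Fin.tail a) b)

theorem continuous_chainMul [TopologicalSpace M] (hmul : Continuous fun p : M × M => mul p.1 p.2)
    (k : ℕ) : Continuous fun p : (Fin k → M) × M => chainMul mul k p.1 p.2 := by
  induction k with
  | zero => exact continuous_snd
  | succ k ih =>
    have htail : Continuous fun p : (Fin (k + 1) → M) × M => (Fin.tail p.1, p.2) :=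
      (continuous_pi fun i => (continuous_apply i.succ).comp continuous_fst).prodMk continuous_snd
    exact hmul.comp (((continuous_apply 0).comp continuous_fst).prodMk (ih.comp htail))

theorem chainMul_iterate {u v : M → M} (huv : ∀ x, mul (u x) (v x) = x) (k : ℕ) (m : M) :
    chainMul mul k (fun i => u (v^[i] m)) (v^[k] m) = m := by
  induction k generalizing m with
  | zero => rfl
  | succ k ih =>
    change mul (u (v^[0] m)) (chainMul mul k (fun i : Fin k => u (v^[(i : ℕ) + 1] m))
      (v^[k] (v m))) = m
    simp only [Function.iterate_succ_apply, Function.iterate_zero_apply, ih, huv]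

theorem chainMul_mem_iff {X : Set M} (hX : ∀ x y, mul x y ∈ X ↔ x ∈ X ∧ y ∈ X) (k : ℕ)
    (a : Fin k → M) (b : M) : chainMul mul k a b ∈ X ↔ (∀ i, a i ∈ X) ∧ b ∈ X := by
  induction k with
  | zero => simp [chainMul]
  | succ k ih => simp [chainMul, hX, ih, Fin.forall_fin_succ, Fin.tail, and_assoc]

end ChainMul

theorem HomotopyDense.exists_continuous_near_mem {M : Type*} [MetricSpace M] {X : Set M}
    (hX : HomotopyDense X) {T : Type*} [TopologicalSpace T] [CompactSpace T] {A : T → M}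
    (hA : Continuous A) {s : T → ℝ} (hs : Continuous s) (hs01 : ∀ x, s x ∈ Icc 0 1) {δ : ℝ}
    (hδ : 0 < δ) :
    ∃ B : T → M, Continuous B ∧ (∀ x, dist (B x) (A x) < δ) ∧
      ∀ x, (s x = 0 → B x = A x) ∧ (s x ≠ 0 → B x ∈ X) := by
  obtain ⟨H, hH, hH0, hHX⟩ := hX
  obtain ⟨η, hη, hHη⟩ := ((isCompact_range hA).prod (isCompact_singleton (x := (0 : I))))
    |>.exists_forall_dist_lt_of_continuousAt (fun _ _ => hH.continuousAt) hδ
  set t := min 1 (η / 2)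
  have ht : 0 < t := by positivity
  have hτ : ∀ x, t * s x ∈ I := fun x =>
    ⟨mul_nonneg ht.le (hs01 x).1, mul_le_one₀ (min_le_left _ _) (hs01 x).1 (hs01 x).2⟩
  refine ⟨fun x => H (A x, ⟨t * s x, hτ x⟩), hH.comp (hA.prodMk (by fun_prop)),
    fun x => ?_, fun x => ⟨fun h0 => ?_, fun h0 => hHX _ _ ?_⟩⟩
  · have hnear : dist (A x, (⟨t * s x, hτ x⟩ : I)) (A x, 0) < η := by
      rw [Prod.dist_eq, dist_self, Subtype.dist_eq, Icc.coe_zero, dist_zero_right,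
        Real.norm_of_nonneg (hτ x).1]
      calc max 0 (t * s x) ≤ η / 2 := max_le (by positivity) ((mul_le_of_le_one_right ht.le
              (hs01 x).2).trans (min_le_right _ _))
        _ < η := half_lt_self hη
    simpa only [hH0] using hHη _ ⟨⟨x, rfl⟩, mem_singleton _⟩ _ hnear
  · have hτ0 : (⟨t * s x, hτ x⟩ : I) = 0 := Subtype.ext (by simp [h0])
    simp only [hτ0, hH0]
  · exact fun h => h0 (by simpa [ht.ne'] using congrArg Subtype.val h)

section Kuratowski

variable {M : Type*} [MetricSpace M]

noncomputable def kuratowskiMap (m₀ m : M) : M →ᵇ ℝ :=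
  .ofNormedAddCommGroup (fun x => dist m x - dist m₀ x) (by fun_prop) (dist m m₀)
    fun x => abs_dist_sub_le m m₀ x

theorem kuratowskiMap_apply (m₀ m x : M) : kuratowskiMap m₀ m x = dist m x - dist m₀ x := rfl

theorem isometry_kuratowskiMap (m₀ : M) : Isometry (kuratowskiMap m₀) := by
  refine Isometry.of_dist_eq fun m m' => le_antisymm ?_ ?_
  · refine (BoundedContinuousFunction.dist_le dist_nonneg).2 fun x => ?_
    rw [Real.dist_eq, kuratowskiMap_apply, kuratowskiMap_apply, sub_sub_sub_cancel_right]
    exact abs_dist_sub_le m m' x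
  · have h := BoundedContinuousFunction.dist_coe_le_dist (f := kuratowskiMap m₀ m)
      (g := kuratowskiMap m₀ m') m'
    rw [kuratowskiMap_apply, kuratowskiMap_apply, Real.dist_eq, sub_sub_sub_cancel_right] at h
    simpa using h

/- This is what makes the image of `kuratowskiMap m₀` closed in its convex hull (though not, in
general, in `M →ᵇ ℝ`): `f` can only be approached by `kuratowskiMap m₀ x` with `x → m`. -/
theorem exists_mul_dist_le_of_mem_convexHull {m₀ : M} {f : M →ᵇ ℝ}
    (hf : f ∈ convexHull ℝ (range (kuratowskiMap m₀))) :
    ∃ m, ∃ c > 0, ∀ x, c * dist m x ≤ f x + dist m₀ x := by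
  refine convexHull_min (t := {f : M →ᵇ ℝ | ∃ m, ∃ c > 0, ∀ x, c * dist m x ≤ f x + dist m₀ x})
    ?_ ?_ hf
  · rintro _ ⟨m, rfl⟩
    exact ⟨m, 1, one_pos, fun x => by simp [kuratowskiMap_apply]⟩
  · rintro f ⟨m, c, hc, hfm⟩ g ⟨m', c', hc', hgm'⟩ a b ha hb hab
    have hg0 : ∀ x, 0 ≤ g x + dist m₀ x := fun x => (by positivity : 0 ≤ c' * _).trans (hgm' x)
    have hcomb : ∀ x, (a • f + b • g) x + dist m₀ x =
        a * (f x + dist m₀ x) + b * (g x + dist m₀ x) := fun x => by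
      simp only [BoundedContinuousFunction.add_apply, BoundedContinuousFunction.smul_apply,
        smul_eq_mul]
      linear_combination (-dist m₀ x) * hab
    rcases ha.lt_or_eq with ha | rfl
    · refine ⟨m, a * c, by positivity, fun x => ?_⟩
      rw [hcomb, mul_assoc]
      nlinarith [hfm x, hg0 x]
    · obtain rfl : b = 1 := by linarith
      refine ⟨m', c', hc', fun x => ?_⟩
      rw [hcomb]
      linarith [hgm' x]

theorem mem_range_kuratowskiMap_of_mem_convexHull {m₀ : M} {f : M →ᵇ ℝ}
    (hhull : f ∈ convexHull ℝ (range (kuratowskiMap m₀)))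
    (hcl : f ∈ closure (range (kuratowskiMap m₀))) : f ∈ range (kuratowskiMap m₀) := by
  obtain ⟨m, c, hc, hfm⟩ := exists_mul_dist_le_of_mem_convexHull hhull
  have hbound : ∀ x, dist f (kuratowskiMap m₀ m) ≤ (1 + c⁻¹) * dist f (kuratowskiMap m₀ x) := by
    intro x
    have hx : c * dist m x ≤ dist f (kuratowskiMap m₀ x) := by
      refine (hfm x).trans (le_trans ?_ (BoundedContinuousFunction.dist_coe_le_dist x))
      rw [Real.dist_eq, kuratowskiMap_apply, dist_self]
      exact le_of_eq_of_le (by ring) (le_abs_self _)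
    calc dist f (kuratowskiMap m₀ m)
        ≤ dist f (kuratowskiMap m₀ x) + dist x m := by
          rw [← (isometry_kuratowskiMap m₀).dist_eq]; exact dist_triangle _ _ _
      _ ≤ dist f (kuratowskiMap m₀ x) + c⁻¹ * dist f (kuratowskiMap m₀ x) := by
          rw [dist_comm x m, inv_mul_eq_div]
          gcongr
          rwa [le_div_iff₀' hc]
      _ = (1 + c⁻¹) * dist f (kuratowskiMap m₀ x) := by ring
  refine ⟨m, (eq_of_forall_dist_le fun ε hε => ?_).symm⟩
  obtain ⟨_, ⟨x, rfl⟩, hx⟩ := Metric.mem_closure_iff.1 hcl (ε / (1 + c⁻¹)) (by positivity)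
  calc dist f (kuratowskiMap m₀ m) ≤ (1 + c⁻¹) * dist f (kuratowskiMap m₀ x) := hbound x
    _ ≤ ε := by rw [← le_div_iff₀' (by positivity)]; exact hx.le

noncomputable def kuratowskiMapToHull (m₀ m : M) : convexHull ℝ (range (kuratowskiMap m₀)) :=
  ⟨kuratowskiMap m₀ m, subset_convexHull ℝ _ ⟨m, rfl⟩⟩

theorem isClosedEmbedding_kuratowskiMapToHull (m₀ : M) :
    IsClosedEmbedding (kuratowskiMapToHull m₀) := by
  have hiso : Isometry (kuratowskiMapToHull m₀) :=
    Isometry.of_dist_eq fun m m' => (isometry_kuratowskiMap m₀).dist_eq m m'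
  refine ⟨hiso.isEmbedding, isClosed_of_closure_subset fun ξ hξ => ?_⟩
  obtain ⟨m, hm⟩ := mem_range_kuratowskiMap_of_mem_convexHull ξ.2
    (map_mem_closure continuous_subtype_val hξ (by rintro _ ⟨m, rfl⟩; exact ⟨m, rfl⟩))
  exact ⟨m, Subtype.ext hm⟩

end Kuratowski

theorem IsANR.exists_retraction_kuratowskiMapToHull {M : Type} [MetricSpace M] (hANR : IsANR M)
    (m₀ : M) {P : Set M} (hP : IsCompact P) {δ : ℝ} (hδ : 0 < δ) :
    ∃ (U : Set (convexHull ℝ (range (kuratowskiMap m₀)))) (r : convexHull ℝ _ → M),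
      ContinuousOn r U ∧ (∀ m, r (kuratowskiMapToHull m₀ m) = m) ∧ ∃ γ > 0, ∀ p ∈ P, ∀ ξ,
        dist ξ (kuratowskiMapToHull m₀ p) < γ → ξ ∈ U ∧ dist (r ξ) p < δ := by
  have hemb := isClosedEmbedding_kuratowskiMapToHull m₀
  obtain ⟨U, r, hU, hrange, hr, hre⟩ := hANR _ _ hemb
  have hK : IsCompact (kuratowskiMapToHull m₀ '' P) := hP.image hemb.continuous
  have hKU : kuratowskiMapToHull m₀ '' P ⊆ U := image_subset_iff.2 fun m _ => hrange ⟨m, rfl⟩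
  obtain ⟨γ₁, hγ₁, hthick⟩ := hK.exists_thickening_subset_open hU hKU
  obtain ⟨γ₂, hγ₂, hunif⟩ := hK.exists_forall_dist_lt_of_continuousAt
    (fun ξ hξ => hr.continuousAt (hU.mem_nhds (hKU hξ))) hδ
  refine ⟨U, r, hr, hre, min γ₁ γ₂, lt_min hγ₁ hγ₂, fun p hp ξ hξ => ⟨?_, ?_⟩⟩
  · exact hthick (Metric.mem_thickening_iff.2
      ⟨_, mem_image_of_mem _ hp, hξ.trans_le (min_le_left _ _)⟩)
  · simpa only [hre] using hunif _ (mem_image_of_mem _ hp) ξ (hξ.trans_le (min_le_right _ _))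

/- The glued map is `r ∘ Y` for a neighbourhood retraction `r` onto the Kuratowski image, where
`Y x = e (L x) + ∑ i, θ i x • (e (φ i x) - e (L x))` has at most one nonzero summand and so lies
on a short segment of the convex hull starting at `e (L x)`. -/
theorem IsANR.exists_glue {M : Type} [MetricSpace M] (hANR : IsANR M) {T : Type*}
    [TopologicalSpace T] [CompactSpace T] {L : T → M} (hL : Continuous L) {δ : ℝ} (hδ : 0 < δ) :
    ∃ γ > 0, ∀ {ι : Type*} [Fintype ι] (φ : ι → T → M) (θ : ι → T → ℝ),
      (∀ i, Continuous (φ i)) → (∀ i, Continuous (θ i)) → (∀ i x, θ i x ∈ Icc 0 1) →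
      (∀ i j x, i ≠ j → θ i x ≠ 0 → θ j x = 0) → (∀ i x, θ i x ≠ 0 → dist (φ i x) (L x) < γ) →
      ∃ A : T → M, Continuous A ∧ (∀ x, dist (A x) (L x) < δ) ∧
        ∀ i x, θ i x = 1 → A x = φ i x := by
  rcases isEmpty_or_nonempty T with hT | ⟨⟨x₀⟩⟩
  · exact ⟨1, one_pos, fun _ _ _ _ _ _ _ => ⟨L, hL, isEmptyElim, fun _ => isEmptyElim⟩⟩
  set e := kuratowskiMap (L x₀)
  set eY := kuratowskiMapToHull (L x₀)
  have he : Continuous e := (isometry_kuratowskiMap _).continuous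
  obtain ⟨U, r, hr, hre, γ, hγ, hcontrol⟩ :=
    hANR.exists_retraction_kuratowskiMapToHull (L x₀) (isCompact_range hL) hδ
  refine ⟨γ, hγ, fun φ θ hφ hθ hθ01 hdisj hnear => ?_⟩
  set S : T → M →ᵇ ℝ := fun x => ∑ i, θ i x • (e (φ i x) - e (L x))
  have hsingle : ∀ i x, θ i x ≠ 0 → S x = θ i x • (e (φ i x) - e (L x)) := fun i x hi =>
    Fintype.sum_eq_single i fun j hj => by rw [hdisj i j x hj.symm hi, zero_smul]
  have hseg : ∀ x, ∃ m, ∃ t ∈ Icc (0 : ℝ) 1, dist m (L x) < γ ∧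
      S x = t • (e m - e (L x)) := by
    intro x
    by_cases h : ∃ i, θ i x ≠ 0
    · obtain ⟨i, hi⟩ := h
      exact ⟨φ i x, θ i x, hθ01 i x, hnear i x hi, hsingle i x hi⟩
    · simp only [not_exists, not_not] at h
      refine ⟨L x, 0, left_mem_Icc.2 zero_le_one, by simpa using hγ, ?_⟩
      simp [S, h]
  have hhull : ∀ x, e (L x) + S x ∈ convexHull ℝ (range e) := fun x => by
    obtain ⟨m, t, ht, -, hS⟩ := hseg x
    rw [hS]
    exact (convex_convexHull ℝ _).add_smul_sub_mem (subset_convexHull ℝ _ (mem_range_self _))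
      (subset_convexHull ℝ _ (mem_range_self _)) ht
  set Y : T → convexHull ℝ (range e) := fun x => ⟨e (L x) + S x, hhull x⟩
  have hYcont : Continuous Y :=
    Continuous.subtype_mk ((he.comp hL).add (continuous_finsetSum _ fun i _ =>
      (hθ i).smul ((he.comp (hφ i)).sub (he.comp hL)))) _
  have hYnear : ∀ x, dist (Y x) (eY (L x)) < γ := fun x => by
    obtain ⟨m, t, ht, hm, hS⟩ := hseg x
    rw [Subtype.dist_eq]
    change dist (e (L x) + S x) (e (L x)) < _
    rw [dist_eq_norm, add_sub_cancel_left, hS, norm_smul, ← dist_eq_norm,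
      (isometry_kuratowskiMap _).dist_eq, Real.norm_of_nonneg ht.1]
    exact (mul_le_of_le_one_left dist_nonneg ht.2).trans_lt hm
  refine ⟨fun x => r (Y x), hr.comp_continuous hYcont fun x =>
    (hcontrol _ (mem_range_self x) _ (hYnear x)).1, fun x =>
    (hcontrol _ (mem_range_self x) _ (hYnear x)).2, fun i x hi => ?_⟩
  have hY : Y x = eY (φ i x) := Subtype.ext (by
    change e (L x) + S x = e (φ i x)
    rw [hsingle i x (by rw [hi]; exact one_ne_zero), hi, one_smul, add_sub_cancel])
  change r (Y x) = φ i x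
  rw [hY, hre]

theorem IsANR.exists_glue_of_homotopyDense {M : Type} [MetricSpace M] (hANR : IsANR M)
    {X : Set M} (hX : HomotopyDense X) {T : Type*} [TopologicalSpace T] [CompactSpace T]
    {L : T → M} (hL : Continuous L) {δ : ℝ} (hδ : 0 < δ) :
    ∃ γ > 0, ∀ {ι : Type*} [Fintype ι] (φ : ι → T → M) (θ : ι → T → ℝ),
      (∀ i, Continuous (φ i)) → (∀ i, Continuous (θ i)) → (∀ i x, θ i x ∈ Icc 0 1) →
      (∀ i j x, i ≠ j → θ i x ≠ 0 → θ j x = 0) → (∀ i x, θ i x ≠ 0 → dist (φ i x) (L x) < γ) →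
      ∃ B : T → M, Continuous B ∧ (∀ x, dist (B x) (L x) < δ) ∧
        (∀ i x, θ i x = 1 → B x = φ i x) ∧ ∀ x, (∀ i, θ i x ≠ 1) → B x ∈ X := by
  obtain ⟨γ, hγ, hglue⟩ := hANR.exists_glue hL (half_pos hδ)
  refine ⟨γ, hγ, fun φ θ hφ hθ hθ01 hdisj hnear => ?_⟩
  obtain ⟨A, hA, hAL, hAφ⟩ := hglue φ θ hφ hθ hθ01 hdisj hnear
  have hs01 : ∀ x, ∏ i, (1 - θ i x) ∈ Icc (0 : ℝ) 1 := fun x =>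
    ⟨Finset.prod_nonneg fun i _ => sub_nonneg.2 (hθ01 i x).2,
      Finset.prod_le_one (fun i _ => sub_nonneg.2 (hθ01 i x).2)
        fun i _ => sub_le_self _ (hθ01 i x).1⟩
  obtain ⟨B, hB, hBA, hBX⟩ := hX.exists_continuous_near_mem hA (s := fun x => ∏ i, (1 - θ i x))
    (continuous_finsetProd _ fun i _ => continuous_const.sub (hθ i)) hs01 (half_pos hδ)
  refine ⟨B, hB, fun x => ?_, fun i x hi => ?_, fun x hx => (hBX x).2 fun h0 => ?_⟩
  · calc dist (B x) (L x) ≤ dist (B x) (A x) + dist (A x) (L x) := dist_triangle _ _ _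
      _ < δ / 2 + δ / 2 := add_lt_add (hBA x) (hAL x)
      _ = δ := add_halves δ
  · rw [(hBX x).1 (Finset.prod_eq_zero (Finset.mem_univ i) (by rw [hi, sub_self])),
      hAφ i x hi]
  · obtain ⟨i, -, hi⟩ := Finset.prod_eq_zero_iff.1 h0
    exact hx i (sub_eq_zero.1 hi).symm

theorem CovDimLE.exists_finite_refinement {Z : Type*} [TopologicalSpace Z] [CompactSpace Z]
    {n : ℕ} (hZ : CovDimLE Z n) {κ : Type*} {W : κ → Set Z} (hWo : ∀ k, IsOpen (W k))
    (hW : ∀ z, ∃ k, z ∈ W k) :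
    ∃ 𝒱 : Set (Set Z), 𝒱.Finite ∧ IsOpenCover 𝒱 ∧ (∀ V ∈ 𝒱, ∃ k, V ⊆ W k) ∧
      ∀ z, {V ∈ 𝒱 | z ∈ V}.encard ≤ n + 1 := by
  obtain ⟨𝒱, h𝒱, href, hmult⟩ := hZ (range W)
    (And.intro (forall_mem_range.2 hWo) (eq_univ_of_forall fun z =>
      mem_sUnion_of_mem (hW z).choose_spec (mem_range_self _)))
  obtain ⟨𝒱', h𝒱'𝒱, hfin, hcov⟩ := isCompact_univ.elim_finite_subcover_image (c := id)
    (fun V hV => h𝒱.1 V hV) (by simpa [← sUnion_eq_biUnion] using h𝒱.2.ge)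
  refine ⟨𝒱', hfin, And.intro (fun V hV => h𝒱.1 V (h𝒱'𝒱 hV)) ?_, fun V hV => ?_, fun z => ?_⟩
  · simpa [← sUnion_eq_biUnion, univ_subset_iff] using hcov
  · obtain ⟨_, ⟨k, rfl⟩, hVk⟩ := href V (h𝒱'𝒱 hV)
    exact ⟨k, hVk⟩
  · refine (encard_le_encard ?_).trans (hmult z)
    exact fun V hV => ⟨h𝒱'𝒱 hV.1, hV.2⟩

section LeadingSet

variable {ι Z : Type*} (κ : ι → Z → ℝ)

/- For distinct `s` of the same size these sets are disjoint, and every point at which some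
`κ i` is positive lies in the one indexed by the set of indices where `κ` is maximal. -/
def leadingSet (s : Finset ι) : Set Z :=
  {z | ∀ i ∈ s, 0 < κ i z ∧ ∀ j ∉ s, κ j z < κ i z}

variable {κ}

theorem isOpen_leadingSet [TopologicalSpace Z] [Finite ι] (hκ : ∀ i, Continuous (κ i))
    (s : Finset ι) : IsOpen (leadingSet κ s) := by
  have h : leadingSet κ s =
      ⋂ i ∈ s, ({z | 0 < κ i z} ∩ ⋂ (j) (_ : j ∉ s), {z | κ j z < κ i z}) := by
    ext; simp [leadingSet]
  rw [h]
  exact isOpen_biInter_finset fun i _ => (isOpen_lt continuous_const (hκ i)).inter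
    (isOpen_iInter_of_finite fun j => isOpen_iInter_of_finite fun _ => isOpen_lt (hκ j) (hκ i))

theorem disjoint_leadingSet {s t : Finset ι} (hne : s ≠ t) (hcard : s.card = t.card) :
    Disjoint (leadingSet κ s) (leadingSet κ t) := by
  refine disjoint_left.2 fun z hs ht => ?_
  obtain ⟨i, his, hit⟩ := Finset.not_subset.1 fun h =>
    hne (Finset.eq_of_subset_of_card_le h hcard.ge)
  obtain ⟨j, hjt, hjs⟩ := Finset.not_subset.1 fun h =>
    hne (Finset.eq_of_subset_of_card_le h hcard.le).symm
  exact lt_asymm ((hs i his).2 j hjs) ((ht j hjt).2 i hit)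

theorem exists_mem_leadingSet [Fintype ι] {z : Z} {i₀ : ι} (h : 0 < κ i₀ z) :
    ∃ s : Finset ι, s.Nonempty ∧ z ∈ leadingSet κ s := by
  classical
  obtain ⟨i₁, -, hmax⟩ := Finset.exists_max_image Finset.univ (fun i => κ i z)
    ⟨i₀, Finset.mem_univ _⟩
  refine ⟨Finset.univ.filter fun i => κ i₁ z ≤ κ i z, ⟨i₁, by simp⟩, fun i hi => ?_⟩
  simp only [Finset.mem_filter, Finset.mem_univ, true_and, not_le] at hi ⊢
  exact ⟨h.trans_le ((hmax i₀ (Finset.mem_univ _)).trans hi), fun j hj => hj.trans_le hi⟩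

end LeadingSet

theorem CovDimLE.exists_finite_pos_cover {Z : Type u} [TopologicalSpace Z] [CompactSpace Z]
    [T2Space Z] {n : ℕ} (hZ : CovDimLE Z n) {κ : Type*} {W : κ → Set Z}
    (hWo : ∀ k, IsOpen (W k)) (hW : ∀ z, ∃ k, z ∈ W k) :
    ∃ (ι : Type u) (_ : Fintype ι) (β : ι → Z → ℝ), (∀ i, Continuous (β i)) ∧
      (∀ z, ∃ i, 0 < β i z) ∧ (∀ i, ∃ k, {z | 0 < β i z} ⊆ W k) ∧
      ∀ z, {i | 0 < β i z}.encard ≤ n + 1 := by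
  obtain ⟨𝒱, hfin, h𝒱, href, hmult⟩ := hZ.exists_finite_refinement hWo hW
  have := hfin.fintype
  obtain ⟨β, hβ⟩ := BumpCovering.exists_isSubordinate_of_locallyFinite isClosed_univ
    (fun V : 𝒱 => (V : Set Z)) (fun V => h𝒱.1 V V.2) (locallyFinite_of_finite _)
    fun z _ => by
      obtain ⟨V, hV, hz⟩ : z ∈ ⋃₀ 𝒱 := h𝒱.2.ge (mem_univ z)
      exact mem_iUnion.2 ⟨⟨V, hV⟩, hz⟩
  have hβV : ∀ V z, 0 < β V z → z ∈ (V : Set Z) := fun V z h =>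
    hβ V (subset_tsupport _ h.ne')
  refine ⟨𝒱, inferInstance, fun V => β V, fun V => (β V).continuous, fun z => ?_,
    fun V => ?_, fun z => ?_⟩
  · refine ⟨β.ind z (mem_univ z), ?_⟩
    simp only [(β.eventuallyEq_one z (mem_univ z)).eq_of_nhds, Pi.one_apply, one_pos]
  · obtain ⟨k, hVk⟩ := href V V.2
    exact ⟨k, fun z hz => hVk (hβV V z hz)⟩
  · calc {V | 0 < β V z}.encard = (Subtype.val '' {V | 0 < β V z}).encard :=
        (Subtype.val_injective.injOn.encard_image).symm
      _ ≤ {V ∈ 𝒱 | z ∈ V}.encard := encard_le_encard (by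
        rintro _ ⟨V, hV, rfl⟩
        exact ⟨V.2, hβV V z hV⟩)
      _ ≤ n + 1 := hmult z

/- The sets `leadingSet β s` with `s` nonempty, coloured by `#s - 1`, form an open cover in which
sets of equal colour are disjoint; `#s ≤ n + 1` by the order bound. -/
theorem exists_colouredBumpCovering_of_pos_cover {Z ι₀ : Type u} [TopologicalSpace Z]
    [NormalSpace Z] [Fintype ι₀] {β : ι₀ → Z → ℝ} (hβ : ∀ i, Continuous (β i))
    (hpos : ∀ z, ∃ i, 0 < β i z) {n : ℕ} (horder : ∀ z, {i | 0 < β i z}.encard ≤ n + 1) :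
    ∃ (ι : Type u) (_ : Fintype ι) (c : ι → Fin (n + 1)) (θ : BumpCovering ι Z),
      (∀ i, ∃ i₀, Function.support (θ i) ⊆ {z | 0 < β i₀ z}) ∧
      ∀ i j z, i ≠ j → c i = c j → θ i z ≠ 0 → θ j z = 0 := by
  classical
  let ι := {s : Finset ι₀ // s.Nonempty ∧ s.card ≤ n + 1}
  have hcov : ∀ z, ∃ s : ι, z ∈ leadingSet β s.1 := by
    intro z
    obtain ⟨i₀, hi₀⟩ := hpos z
    obtain ⟨s, hs, hz⟩ := exists_mem_leadingSet hi₀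
    have hcard := (encard_le_encard fun i (hi : i ∈ (s : Set ι₀)) => (hz i hi).1).trans
      (horder z)
    rw [encard_coe_eq_coe_finsetCard] at hcard
    exact ⟨⟨s, hs, by exact_mod_cast hcard⟩, hz⟩
  obtain ⟨θ, hθ⟩ := BumpCovering.exists_isSubordinate_of_locallyFinite isClosed_univ
    (fun s : ι => leadingSet β s.1) (fun s => isOpen_leadingSet hβ _) (locallyFinite_of_finite _)
    (fun z _ => mem_iUnion.2 (hcov z))
  have hθs : ∀ s z, θ s z ≠ 0 → z ∈ leadingSet β s.1 := fun s z h => hθ s (subset_tsupport _ h)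
  refine ⟨ι, inferInstance, fun s => ⟨s.1.card - 1, by omega⟩, θ, fun s => ?_,
    fun s t z hne hc hs => by_contra fun ht => ?_⟩
  · obtain ⟨i, hi⟩ := s.2.1
    exact ⟨i, fun z hz => (hθs s z hz i hi).1⟩
  · have hcard : s.1.card = t.1.card := by
      have := s.2.1.card_pos
      have := t.2.1.card_pos
      have := Fin.val_eq_of_eq hc
      simp only at this
      omega
    exact disjoint_left.1 (disjoint_leadingSet (fun h => hne (Subtype.ext h)) hcard)
      (hθs s z hs) (hθs t z ht)

theorem CovDimLE.exists_colouredBumpCovering {Z : Type u} [TopologicalSpace Z] [CompactSpace Z]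
    [T2Space Z] {n : ℕ} (hZ : CovDimLE Z n) {κ : Type*} {W : κ → Set Z}
    (hWo : ∀ k, IsOpen (W k)) (hW : ∀ z, ∃ k, z ∈ W k) :
    ∃ (ι : Type u) (_ : Fintype ι) (c : ι → Fin (n + 1)) (θ : BumpCovering ι Z),
      (∀ i, ∃ k, Function.support (θ i) ⊆ W k) ∧
      ∀ i j z, i ≠ j → c i = c j → θ i z ≠ 0 → θ j z = 0 := by
  obtain ⟨ι₀, _, β, hβ, hpos, hβW, horder⟩ := hZ.exists_finite_pos_cover hWo hW
  obtain ⟨ι, _, c, θ, hθβ, hdisj⟩ := exists_colouredBumpCovering_of_pos_cover hβ hpos horder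
  refine ⟨ι, inferInstance, c, θ, fun i => ?_, hdisj⟩
  obtain ⟨i₀, hi₀⟩ := hθβ i
  obtain ⟨k, hk⟩ := hβW i₀
  exact ⟨k, hi₀.trans hk⟩

theorem IsANR.exists_colourwise_glue {M : Type} [MetricSpace M] (hANR : IsANR M) {X : Set M}
    (hX : HomotopyDense X) {T : Type*} [TopologicalSpace T] [CompactSpace T] {κ : Type*}
    [Fintype κ] [Nonempty κ] {L : κ → T → M} (hL : ∀ k, Continuous (L k)) {δ : ℝ}
    (hδ : 0 < δ) :
    ∃ γ > 0, ∀ {ι : Type*} [Fintype ι] (c : ι → κ) (φ : ι → T → M) (θ : ι → T → ℝ),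
      (∀ i, Continuous (φ i)) → (∀ i, Continuous (θ i)) → (∀ i x, θ i x ∈ Icc 0 1) →
      (∀ i j x, i ≠ j → c i = c j → θ i x ≠ 0 → θ j x = 0) →
      (∀ i x, θ i x ≠ 0 → dist (φ i x) (L (c i) x) < γ) →
      ∃ B : κ → T → M, (∀ k, Continuous (B k)) ∧ (∀ k x, dist (B k x) (L k x) < δ) ∧
        (∀ i x, θ i x = 1 → B (c i) x = φ i x) ∧
        ∀ k x, (∀ i, c i = k → θ i x ≠ 1) → B k x ∈ X := by
  classical
  choose γ hγ hglue using fun k => hANR.exists_glue_of_homotopyDense hX (hL k) hδ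
  refine ⟨Finset.univ.inf' Finset.univ_nonempty γ, (Finset.lt_inf'_iff _).2 fun k _ => hγ k,
    fun c φ θ hφ hθ hθ01 hdisj hnear => ?_⟩
  have hcolour : ∀ k, ∃ B : T → M, Continuous B ∧ (∀ x, dist (B x) (L k x) < δ) ∧
      (∀ i : {i // c i = k}, ∀ x, θ i x = 1 → B x = φ i x) ∧
      ∀ x, (∀ i : {i // c i = k}, θ i x ≠ 1) → B x ∈ X := fun k =>
    hglue k (ι := {i // c i = k}) (fun i => φ i) (fun i => θ i) (fun i => hφ i) (fun i => hθ i)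
      (fun i => hθ01 i)
      (fun i j x hij => hdisj i j x (Subtype.val_injective.ne hij) (i.2.trans j.2.symm))
      fun ⟨i, hi⟩ x hx => hi ▸ (hnear i x hx).trans_le (Finset.inf'_le _ (Finset.mem_univ _))
  choose B hB hBL hBφ hBX using hcolour
  exact ⟨B, hB, hBL, fun i x => hBφ (c i) ⟨i, rfl⟩ x, fun k x hx => hBX k x fun i => hx i i.2⟩

theorem IsANR.exists_approx_forall_mem_iff {M : Type} [MetricSpace M] (hANR : IsANR M)
    {X : Set M} (hX : HomotopyDense X) {K : Type*} [TopologicalSpace K] {C : Set K}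
    (hpre : ∀ U : Set M, IsOpen U → U.Nonempty →
      ∃ φ : K → M, Continuous φ ∧ φ ⁻¹' X = C ∧ range φ ⊆ U)
    {Z : Type*} [TopologicalSpace Z] [CompactSpace Z] [T2Space Z] {n : ℕ} (hdim : CovDimLE Z n)
    {T : Type*} [TopologicalSpace T] [CompactSpace T] {e : T → K} (he : Continuous e)
    {f : T → Z} (hf : Continuous f) {L : Fin (n + 1) → Z → M} (hL : ∀ j, Continuous (L j))
    {δ : ℝ} (hδ : 0 < δ) :
    ∃ B : Fin (n + 1) → T → M, (∀ j, Continuous (B j)) ∧ (∀ j x, dist (B j x) (L j (f x)) < δ) ∧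
      ∀ x, (∀ j, B j x ∈ X) ↔ e x ∈ C := by
  obtain ⟨γ, hγ, hglue⟩ := hANR.exists_colourwise_glue hX (fun j => (hL j).comp hf) hδ
  obtain ⟨ι, _, c, θ, hθW, hθdisj⟩ := hdim.exists_colouredBumpCovering
    (W := fun z => {y | ∀ j, dist (L j y) (L j z) < γ / 2})
    (fun z => by
      simpa only [ofPred_forall] using isOpen_iInter_of_finite fun j =>
        isOpen_lt ((hL j).dist continuous_const) continuous_const)
    fun z => ⟨z, fun j => by simpa using half_pos hγ⟩
  choose z₀ hz₀ using hθW
  choose φ hφ hφX hφU using fun i => hpre (Metric.ball (L (c i) (z₀ i)) (γ / 2))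
    Metric.isOpen_ball (Metric.nonempty_ball.2 (half_pos hγ))
  have hnear : ∀ i x, θ i (f x) ≠ 0 → dist (φ i (e x)) (L (c i) (f x)) < γ := fun i x hi =>
    calc dist (φ i (e x)) (L (c i) (f x))
        ≤ dist (φ i (e x)) (L (c i) (z₀ i)) + dist (L (c i) (f x)) (L (c i) (z₀ i)) :=
          dist_triangle_right _ _ _
      _ < γ / 2 + γ / 2 := add_lt_add (hφU i (mem_range_self _)) (hz₀ i hi (c i))
      _ = γ := add_halves γ
  obtain ⟨B, hB, hBL, hBφ, hBX⟩ := hglue c (fun i x => φ i (e x)) (fun i x => θ i (f x))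
    (fun i => (hφ i).comp he) (fun i => (θ i).continuous.comp hf)
    (fun i x => ⟨θ.nonneg i _, θ.le_one i _⟩) (fun i j x => hθdisj i j (f x)) hnear
  refine ⟨B, hB, hBL, fun x => ⟨fun hBX' => ?_, fun hx j => ?_⟩⟩
  · obtain ⟨i, hi⟩ : ∃ i, θ i (f x) = 1 := ⟨_, (θ.eventuallyEq_one (f x) (mem_univ _)).eq_of_nhds⟩
    rw [← hφX i, mem_preimage, ← hBφ i x hi]
    exact hBX' (c i)
  · by_cases h : ∃ i, c i = j ∧ θ i (f x) = 1
    · obtain ⟨i, rfl, hi⟩ := h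
      rw [hBφ i x hi, ← mem_preimage, hφX]
      exact hx
    · exact hBX j x fun i hi => not_and.1 (not_exists.1 h i) hi

theorem statement10_general {M : Type} [MetricSpace M]
    (hANR : IsANR M)
    (mul : M → M → M) (hmul : Continuous fun p : M × M => mul p.1 p.2)
    (u v : M → M) (hu : Continuous u) (hv : Continuous v)
    (huv : ∀ x, mul (u x) (v x) = x)
    (X : Set M) (hX : HomotopyDense X)
    (hXmul : ∀ x y, mul x y ∈ X ↔ x ∈ X ∧ y ∈ X)
    (vC : (K : Type) → [TopologicalSpace K] → Set K → Prop)
    (hpre : EverywherePreuniversalPair X vC)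
    (ε : ℝ) (hε : 0 < ε)
    (K : Type) [TopologicalSpace K] [CompactSpace K] [TopologicalSpace.MetrizableSpace K]
    (C : Set K) (hKC : vC K C)
    (F : Set K) (hF : IsClosed F)
    (Z : Type) [TopologicalSpace Z] [CompactSpace Z] [TopologicalSpace.MetrizableSpace Z]
    (hZ : FiniteCovDim Z)
    (f : F → Z) (hf : Continuous f)
    (g : Z → M) (hg : Continuous g) :
    ∃ h : F → M, Continuous h ∧ (∀ x : F, dist (h x) (g (f x)) < ε) ∧
      (∀ x : F, h x ∈ X ↔ (x : K) ∈ C) := by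
  obtain ⟨n, hdim⟩ := hZ
  have : CompactSpace F := isCompact_iff_compactSpace.1 hF.isCompact
  set L : Fin (n + 1) → Z → M := fun j z => u (v^[j] (g z))
  set R : Z → M := fun z => v^[n + 1] (g z)
  have hL : ∀ j, Continuous (L j) := fun j => hu.comp ((hv.iterate j).comp hg)
  have hR : Continuous R := (hv.iterate _).comp hg
  obtain ⟨δ, hδ, hchain⟩ := IsCompact.exists_forall_dist_lt_of_continuousAt
    (isCompact_range ((continuous_pi hL).prodMk hR))
    (fun _ _ => (continuous_chainMul mul hmul _).continuousAt) hε
  obtain ⟨B, hB, hBL, hBX⟩ := hANR.exists_approx_forall_mem_iff hX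
    (fun U hU hne => hpre U hU hne K C hKC) hdim continuous_subtype_val hf hL hδ
  obtain ⟨ρ, hρ, hρR, hρX⟩ := hX.exists_continuous_near_mem (hR.comp hf) continuous_const
    (fun _ => right_mem_Icc.2 zero_le_one) hδ
  refine ⟨fun x => chainMul mul (n + 1) (fun j => B j x) (ρ x),
    (continuous_chainMul mul hmul _).comp ((continuous_pi hB).prodMk hρ), fun x => ?_, fun x => ?_⟩
  · rw [← chainMul_iterate mul huv (n + 1) (g (f x))]
    refine hchain _ ⟨f x, rfl⟩ (fun j => B j x, ρ x) ?_
    rw [Prod.dist_eq]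
    exact max_lt ((dist_pi_lt_iff hδ).2 fun j => hBL j x) (hρR x)
  · rw [chainMul_mem_iff mul hXmul, hBX x, and_iff_left ((hρX x).2 one_ne_zero)]

/-- Let `M` be a separable metrizable ANR with metric `d`, carrying a continuous binary
operation `*` and continuous `u, v` with `u(x) * v(x) = x`; let `X ⊆ M` be homotopy dense
with `x * y ∈ X ↔ x ∈ X ∧ y ∈ X`, and assume `(M, X)` is everywhere `vC`-preuniversal.
Then for every `ε > 0`, pair `(K, C) ∈ vC`, closed `F ⊆ K`, finite-dimensional compact
metrizable space `Z` and maps `f : F → Z`, `g : Z → X`, there is a continuous map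
`h : F → M` with `d(h, g ∘ f) < ε` and `h⁻¹[X] = F ∩ C`. -/
theorem statement10 {M : Type} [MetricSpace M] [TopologicalSpace.SeparableSpace M]
    (hANR : IsANR M)
    (mul : M → M → M) (hmul : Continuous fun p : M × M => mul p.1 p.2)
    (u v : M → M) (hu : Continuous u) (hv : Continuous v)
    (huv : ∀ x, mul (u x) (v x) = x)
    (X : Set M) (hX : HomotopyDense X)
    (hXmul : ∀ x y, mul x y ∈ X ↔ x ∈ X ∧ y ∈ X)
    (vC : (K : Type) → [TopologicalSpace K] → Set K → Prop)
    (hpre : EverywherePreuniversalPair X vC)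
    (ε : ℝ) (hε : 0 < ε)
    (K : Type) [TopologicalSpace K] [CompactSpace K] [TopologicalSpace.MetrizableSpace K]
    (C : Set K) (hKC : vC K C)
    (F : Set K) (hF : IsClosed F)
    (Z : Type) [TopologicalSpace Z] [CompactSpace Z] [TopologicalSpace.MetrizableSpace Z]
    (hZ : FiniteCovDim Z)
    (f : F → Z) (hf : Continuous f)
    (g : Z → M) (hg : Continuous g) (hgX : ∀ z, g z ∈ X) :
    ∃ h : F → M, Continuous h ∧ (∀ x : F, dist (h x) (g (f x)) < ε) ∧
      (∀ x : F, h x ∈ X ↔ (x : K) ∈ C) :=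
  statement10_general hANR mul hmul u v hu hv huv X hX hXmul vC hpre ε hε K C hKC F hF Z hZ f hf g
    hg
end

section
/- Let Z be a locally compact separable metrizable space, A a topological space, g:A→Z a proper continuous map, and ε:A→(0,1] a continuous function. Then there exists a continuous function δ:Z→(0,1] such that δ(g(x))≤ε(x) for every x∈A. -/
/-!
Over a small compact neighbourhood `K` of a point `z`, the proper map `g` has compact preimage,
so `ε` is bounded below on `g ⁻¹' K` by a constant in `(0,1]`; hence the admissible values
`{c ∈ (0,1] | ∀ x, g x = y → c ≤ ε x}` contain a constant locally near `z`. These sets are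
convex, so a partition of unity on the paracompact space `Z` glues the local constants into a
continuous selection `δ`.
-/

open Set Topology

/-- A map is proper if preimages of compact sets are compact. -/
def ProperMap {X Y : Type*} [TopologicalSpace X] [TopologicalSpace Y] (f : X → Y) : Prop :=
  ∀ K : Set Y, IsCompact K → IsCompact (f ⁻¹' K)

lemma IsCompact.exists_mem_Ioc_forall_le {A : Type*} [TopologicalSpace A] {S : Set A}
    (hS : IsCompact S) {ε : A → ℝ} (hεc : Continuous ε) (hε : ∀ x, ε x ∈ Ioc (0 : ℝ) 1) :
    ∃ c ∈ Ioc (0 : ℝ) 1, ∀ x ∈ S, c ≤ ε x := by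
  have hcompact : IsCompact (insert 1 (ε '' S)) := (hS.image hεc).insert 1
  obtain ⟨c, hc_mem, hc_least⟩ := hcompact.exists_isLeast (insert_nonempty _ _)
  refine ⟨c, ?_, fun x hx => hc_least (mem_insert_of_mem _ (mem_image_of_mem ε hx))⟩
  rcases hc_mem with rfl | ⟨x, -, rfl⟩
  exacts [⟨zero_lt_one, le_rfl⟩, hε x]

lemma ProperMap.exists_mem_Ioc_eventually_le {Z A : Type*} [TopologicalSpace Z]
    [WeaklyLocallyCompactSpace Z] [TopologicalSpace A] {g : A → Z} (hg : ProperMap g)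
    {ε : A → ℝ} (hεc : Continuous ε) (hε : ∀ x, ε x ∈ Ioc (0 : ℝ) 1) (z : Z) :
    ∃ c ∈ Ioc (0 : ℝ) 1, ∀ᶠ y in 𝓝 z, ∀ x, g x = y → c ≤ ε x := by
  obtain ⟨K, hK, hKz⟩ := exists_compact_mem_nhds z
  obtain ⟨c, hc, hcK⟩ := (hg K hK).exists_mem_Ioc_forall_le hεc hε
  exact ⟨c, hc, Filter.eventually_of_mem hKz fun y hy x hx => hcK x (by rwa [mem_preimage, hx])⟩

theorem statement14_general {Z : Type*} [TopologicalSpace Z] [LocallyCompactSpace Z]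
    [TopologicalSpace.MetrizableSpace Z]
    {A : Type*} [TopologicalSpace A]
    (g : A → Z) (hgp : ProperMap g)
    (ε : A → ℝ) (hεc : Continuous ε) (hε : ∀ x, ε x ∈ Set.Ioc (0 : ℝ) 1) :
    ∃ δ : Z → ℝ, Continuous δ ∧ (∀ z, δ z ∈ Set.Ioc (0 : ℝ) 1) ∧
      ∀ x : A, δ (g x) ≤ ε x := by
  let : MetricSpace Z := TopologicalSpace.metrizableSpaceMetric Z
  let admissible : Z → Set ℝ := fun y => Ioc 0 1 ∩ ⋂ (x) (_ : g x = y), Iic (ε x)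
  have hconvex : ∀ y, Convex ℝ (admissible y) := fun y =>
    (convex_Ioc 0 1).inter <| convex_iInter₂ fun x _ => convex_Iic (ε x)
  have hlocal : ∀ z, ∃ c, ∀ᶠ y in 𝓝 z, c ∈ admissible y := fun z => by
    obtain ⟨c, hc, hle⟩ := hgp.exists_mem_Ioc_eventually_le hεc hε z
    exact ⟨c, hle.mono fun _ hy => ⟨hc, mem_iInter₂.2 hy⟩⟩
  obtain ⟨δ, hδ⟩ := exists_continuous_forall_mem_convex_of_local_const hconvex hlocal
  exact ⟨δ, δ.continuous, fun z => (hδ z).1, fun x => mem_iInter₂.1 (hδ (g x)).2 x rfl⟩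

/-- Let `Z` be a locally compact separable metrizable space, `A` a topological space,
`g : A → Z` a proper continuous map and `ε : A → (0,1]` continuous.  Then there is a
continuous `δ : Z → (0,1]` with `δ(g(x)) ≤ ε(x)` for all `x ∈ A`. -/
theorem statement14 {Z : Type*} [TopologicalSpace Z] [LocallyCompactSpace Z]
    [TopologicalSpace.MetrizableSpace Z] [TopologicalSpace.SeparableSpace Z]
    {A : Type*} [TopologicalSpace A]
    (g : A → Z) (hgc : Continuous g) (hgp : ProperMap g)
    (ε : A → ℝ) (hεc : Continuous ε) (hε : ∀ x, ε x ∈ Set.Ioc (0 : ℝ) 1) :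
    ∃ δ : Z → ℝ, Continuous δ ∧ (∀ z, δ z ∈ Set.Ioc (0 : ℝ) 1) ∧
      ∀ x : A, δ (g x) ≤ ε x :=
  statement14_general g hgp ε hεc hε
end
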